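/- Lemma 4 (first identification equation): under the outcome model, the treatment model, IV independence, and the orthogonality conditions (Assumption 2(c), unconditional form), it holds that E[(B − E[B])·(A − E[A|B])·Y] = E[(B − E[B])·(A − E[A|B])·A]·E[ϑ_a(V)] + E[B·(B − E[B])·(A − E[A|B])·A]·E[ϑ_az(V)]. -/

import Mathlib

/-!
Because `A` is binary, `h(A,B) = h(0,B) + Δh(B)·A` with `Δh(x) = h(1,x) - h(0,x)`. Conditioning
`A` on `(B,V)` and using the independence of `B` and `V` then gives, for bounded `f`,
`E[f(V)·h(A,B)] = E[f(V)]·E[h(A,B)] + Cov(f,α_z)·E[Δh(B)·B] + Cov(f,α_u)·E[Δh(B)]`.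
Conditioning `Y` on `(V,A,B)` writes the left-hand side as four such terms, one for each of
`ϑ_a, ϑ_z, ϑ_az, ϑ_u`. Orthogonality removes the covariance terms; for `ϑ_u` only `Cov(ϑ_u,α_z)`
vanishes, but the weight `w(A,B) = (B - E[B])·(A - E[A|B])` has `Δw(B) = B - E[B]`, of mean
zero. The `ϑ_z` and `ϑ_u` terms vanish because `A - E[A|B]` is orthogonal to functions of `B`.
-/

open MeasureTheory ProbabilityTheory
open scoped ENNReal

noncomputable def covE {Ω : Type*} [MeasurableSpace Ω] (μ : Measure Ω) (X Z : Ω → ℝ) : ℝ :=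
  (∫ ω, X ω * Z ω ∂μ) - (∫ ω, X ω ∂μ) * (∫ ω, Z ω ∂μ)

lemma covE_comm {Ω : Type*} [MeasurableSpace Ω] (μ : Measure Ω) (X Z : Ω → ℝ) :
    covE μ X Z = covE μ Z X := by
  simp only [covE, mul_comm]

section

variable {Ω α : Type*} {m₀ : MeasurableSpace Ω} [MeasurableSpace α] {μ : Measure Ω}

lemma memLp_top_comp_of_bounded {X : Ω → α} {f : α → ℝ} (hX : Measurable X) (hf : Measurable f)
    (hfb : ∃ C, ∀ x, |f x| ≤ C) : MemLp (fun ω => f (X ω)) ∞ μ := by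
  obtain ⟨C, hC⟩ := hfb
  exact memLp_top_of_bound (hf.comp hX).aestronglyMeasurable C (ae_of_all _ fun ω => hC (X ω))

lemma memLp_top_comp_of_forall_mem {X : Ω → α} {f : α → ℝ} (hX : Measurable X)
    (hf : Measurable f) (s : Finset α) (hXs : ∀ ω, X ω ∈ s) : MemLp (fun ω => f (X ω)) ∞ μ :=
  memLp_top_of_bound (hf.comp hX).aestronglyMeasurable (∑ x ∈ s, |f x|) (ae_of_all _ fun ω =>
    Finset.single_le_sum (f := fun x => |f x|) (fun _ _ => abs_nonneg _) (hXs ω))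

lemma memLp_top_comp_of_binary {B : Ω → ℝ} (hB : Measurable B) (hB01 : ∀ ω, B ω = 0 ∨ B ω = 1)
    {p : ℝ → ℝ} (hp : Measurable p) : MemLp (fun ω => p (B ω)) ∞ μ :=
  memLp_top_comp_of_forall_mem hB hp {0, 1} fun ω => by rcases hB01 ω with h | h <;> simp [h]

lemma MeasureTheory.MemLp.top_mul {f g : Ω → ℝ} (hf : MemLp f ∞ μ) (hg : MemLp g ∞ μ) :
    MemLp (fun ω => f ω * g ω) ∞ μ :=
  hg.mul' hf

lemma integral_mul_eq_integral_mul_of_condExp_ae_eq [IsFiniteMeasure μ] {m : MeasurableSpace Ω}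
    (hm : m ≤ m₀) {W Y Z : Ω → ℝ} (hW : StronglyMeasurable[m] W) (hWb : MemLp W ∞ μ)
    (hY : Integrable Y μ) (hZ : μ[Y | m] =ᵐ[μ] Z) :
    ∫ ω, W ω * Y ω ∂μ = ∫ ω, W ω * Z ω ∂μ := calc
  _ = ∫ ω, μ[W * Y | m] ω ∂μ := (integral_condExp hm).symm
  _ = ∫ ω, W ω * Z ω ∂μ := integral_congr_ae <| by
    filter_upwards [condExp_mul_of_stronglyMeasurable_left hW (hY.mul_of_top_right hWb) hY, hZ]
      with ω hWY hYZ
    rw [hWY, Pi.mul_apply, hYZ]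

lemma integral_mul_sub_condExp_eq_zero [IsFiniteMeasure μ] {m : MeasurableSpace Ω}
    (hm : m ≤ m₀) {W Y : Ω → ℝ} (hW : StronglyMeasurable[m] W) (hWb : MemLp W ∞ μ)
    (hY : Integrable Y μ) : ∫ ω, W ω * (Y ω - μ[Y | m] ω) ∂μ = 0 := by
  simp only [mul_sub]
  rw [integral_sub (f := fun ω => W ω * Y ω) (g := fun ω => W ω * μ[Y | m] ω)
      (hY.mul_of_top_right hWb) (integrable_condExp.mul_of_top_right hWb),
    integral_mul_eq_integral_mul_of_condExp_ae_eq hm hW hWb hY .rfl, sub_self]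

end

structure BinaryIVModel {Ω 𝒱 : Type*} [MeasurableSpace Ω] [MeasurableSpace 𝒱] (μ : Measure Ω)
    (V : Ω → 𝒱) (A B : Ω → ℝ) (αz αu : 𝒱 → ℝ) : Prop where
  measurable_V : Measurable V
  measurable_A : Measurable A
  measurable_B : Measurable B
  binary_A : ∀ ω, A ω = 0 ∨ A ω = 1
  binary_B : ∀ ω, B ω = 0 ∨ B ω = 1
  measurable_αz : Measurable αz
  measurable_αu : Measurable αu
  bounded_αz : ∃ C, ∀ x, |αz x| ≤ C
  bounded_αu : ∃ C, ∀ x, |αu x| ≤ C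
  condExp_treatment : μ[A | MeasurableSpace.comap (fun ω => (B ω, V ω)) inferInstance]
    =ᵐ[μ] fun ω => αz (V ω) * B ω + αu (V ω)
  indepFun : IndepFun B V μ

namespace BinaryIVModel

variable {Ω 𝒱 : Type*} {m₀ : MeasurableSpace Ω} [MeasurableSpace 𝒱] {μ : Measure Ω}
  {V : Ω → 𝒱} {A B : Ω → ℝ} {αz αu : 𝒱 → ℝ} {f : 𝒱 → ℝ}

lemma memLp_top_comp_A_B (hM : BinaryIVModel μ V A B αz αu) {h : ℝ → ℝ → ℝ}
    (hh : Measurable (Function.uncurry h)) : MemLp (fun ω => h (A ω) (B ω)) ∞ μ :=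
  memLp_top_comp_of_forall_mem (hM.measurable_A.prodMk hM.measurable_B) hh
    ({0, 1} ×ˢ {0, 1}) fun ω => by
      rcases hM.binary_A ω with hA | hA <;> rcases hM.binary_B ω with hB | hB <;> simp [hA, hB]

lemma memLp_top_A (hM : BinaryIVModel μ V A B αz αu) : MemLp A ∞ μ :=
  memLp_top_comp_of_binary hM.measurable_A hM.binary_A measurable_id

lemma memLp_top_B (hM : BinaryIVModel μ V A B αz αu) : MemLp B ∞ μ :=
  memLp_top_comp_of_binary hM.measurable_B hM.binary_B measurable_id

lemma integrable_comp_V_mul_comp_A_B [IsFiniteMeasure μ] (hM : BinaryIVModel μ V A B αz αu)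
    (hf : Measurable f) (hfb : ∃ C, ∀ x, |f x| ≤ C) {h : ℝ → ℝ → ℝ}
    (hh : Measurable (Function.uncurry h)) :
    Integrable (fun ω => f (V ω) * h (A ω) (B ω)) μ :=
  ((memLp_top_comp_of_bounded hM.measurable_V hf hfb).top_mul
    (hM.memLp_top_comp_A_B hh)).integrable le_top

lemma integral_comp_V_mul_comp_B_mul_A [IsFiniteMeasure μ] (hM : BinaryIVModel μ V A B αz αu)
    (hf : Measurable f) (hfb : ∃ C, ∀ x, |f x| ≤ C) {p : ℝ → ℝ} (hp : Measurable p) :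
    ∫ ω, f (V ω) * p (B ω) * A ω ∂μ
      = (∫ ω, f (V ω) * αz (V ω) ∂μ) * (∫ ω, p (B ω) * B ω ∂μ)
        + (∫ ω, f (V ω) * αu (V ω) ∂μ) * ∫ ω, p (B ω) ∂μ := by
  have hfV := memLp_top_comp_of_bounded (μ := μ) hM.measurable_V hf hfb
  have hαzV := memLp_top_comp_of_bounded (μ := μ) hM.measurable_V hM.measurable_αz hM.bounded_αz
  have hαuV := memLp_top_comp_of_bounded (μ := μ) hM.measurable_V hM.measurable_αu hM.bounded_αu
  have hpB := memLp_top_comp_of_binary (μ := μ) hM.measurable_B hM.binary_B hp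
  have hpBB := memLp_top_comp_of_binary (μ := μ) hM.measurable_B hM.binary_B
    (p := fun x => p x * x) (by fun_prop)
  have hW : StronglyMeasurable[MeasurableSpace.comap (fun ω => (B ω, V ω)) inferInstance]
      (fun ω => f (V ω) * p (B ω)) :=
    (((hf.comp measurable_snd).mul (hp.comp measurable_fst)).comp
      (comap_measurable _)).stronglyMeasurable
  calc ∫ ω, f (V ω) * p (B ω) * A ω ∂μ
      = ∫ ω, f (V ω) * p (B ω) * (αz (V ω) * B ω + αu (V ω)) ∂μ :=
        integral_mul_eq_integral_mul_of_condExp_ae_eq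
          (hM.measurable_B.prodMk hM.measurable_V).comap_le hW (hfV.top_mul hpB)
          (hM.memLp_top_A.integrable le_top) hM.condExp_treatment
    _ = ∫ ω, f (V ω) * αz (V ω) * (p (B ω) * B ω) + f (V ω) * αu (V ω) * p (B ω) ∂μ := by
        congr 1 with ω; ring
    _ = _ := by
        rw [integral_add (((hfV.top_mul hαzV).top_mul hpBB).integrable le_top)
            (((hfV.top_mul hαuV).top_mul hpB).integrable le_top),
          hM.indepFun.symm.integral_fun_comp_mul_comp hM.measurable_V.aemeasurable
            hM.measurable_B.aemeasurable (f := fun v => f v * αz v) (g := fun x => p x * x)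
            (hf.mul hM.measurable_αz).aestronglyMeasurable
            (by fun_prop : Measurable _).aestronglyMeasurable,
          hM.indepFun.symm.integral_fun_comp_mul_comp hM.measurable_V.aemeasurable
            hM.measurable_B.aemeasurable (f := fun v => f v * αu v)
            (hf.mul hM.measurable_αu).aestronglyMeasurable hp.aestronglyMeasurable]

lemma integral_comp_V_mul_comp_A_B [IsFiniteMeasure μ] (hM : BinaryIVModel μ V A B αz αu)
    (hf : Measurable f) (hfb : ∃ C, ∀ x, |f x| ≤ C) {h : ℝ → ℝ → ℝ}
    (hh : Measurable (Function.uncurry h)) :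
    ∫ ω, f (V ω) * h (A ω) (B ω) ∂μ
      = (∫ ω, f (V ω) ∂μ) * (∫ ω, h 0 (B ω) ∂μ)
        + (∫ ω, f (V ω) * αz (V ω) ∂μ) * (∫ ω, (h 1 (B ω) - h 0 (B ω)) * B ω ∂μ)
        + (∫ ω, f (V ω) * αu (V ω) ∂μ) * ∫ ω, h 1 (B ω) - h 0 (B ω) ∂μ := by
  have hfV := memLp_top_comp_of_bounded (μ := μ) hM.measurable_V hf hfb
  have hh₀ : Measurable fun x : ℝ => h 0 x := by fun_prop
  have hΔ : Measurable fun x : ℝ => h 1 x - h 0 x := by fun_prop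
  have hsplit : ∀ ω, f (V ω) * h (A ω) (B ω)
      = f (V ω) * h 0 (B ω) + f (V ω) * (h 1 (B ω) - h 0 (B ω)) * A ω := fun ω => by
    rcases hM.binary_A ω with hω | hω <;> rw [hω] <;> ring
  rw [integral_congr_ae (ae_of_all _ hsplit),
    integral_add
      ((hfV.top_mul (memLp_top_comp_of_binary hM.measurable_B hM.binary_B hh₀)).integrable le_top)
      (((hfV.top_mul (memLp_top_comp_of_binary hM.measurable_B hM.binary_B hΔ)).top_mul
        hM.memLp_top_A).integrable le_top),
    hM.indepFun.symm.integral_fun_comp_mul_comp hM.measurable_V.aemeasurable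
      hM.measurable_B.aemeasurable hf.aestronglyMeasurable hh₀.aestronglyMeasurable,
    hM.integral_comp_V_mul_comp_B_mul_A hf hfb hΔ, add_assoc]

lemma integral_comp_V_mul_comp_A_B_eq_covE [IsProbabilityMeasure μ]
    (hM : BinaryIVModel μ V A B αz αu) (hf : Measurable f) (hfb : ∃ C, ∀ x, |f x| ≤ C)
    {h : ℝ → ℝ → ℝ} (hh : Measurable (Function.uncurry h)) :
    ∫ ω, f (V ω) * h (A ω) (B ω) ∂μ
      = (∫ ω, f (V ω) ∂μ) * (∫ ω, h (A ω) (B ω) ∂μ)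
        + covE μ (fun ω => f (V ω)) (fun ω => αz (V ω))
          * (∫ ω, (h 1 (B ω) - h 0 (B ω)) * B ω ∂μ)
        + covE μ (fun ω => f (V ω)) (fun ω => αu (V ω)) * ∫ ω, h 1 (B ω) - h 0 (B ω) ∂μ := by
  have hone := hM.integral_comp_V_mul_comp_A_B (f := fun _ => 1) measurable_const
    ⟨1, fun _ => by simp⟩ hh
  simp only [one_mul, integral_const, probReal_univ, one_smul] at hone
  rw [hM.integral_comp_V_mul_comp_A_B hf hfb hh, hone, covE, covE]
  ring

theorem integral_comp_A_B_mul_eq_of_outcome [IsProbabilityMeasure μ]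
    (hM : BinaryIVModel μ V A B αz αu) {Y : Ω → ℝ} (hY : Integrable Y μ)
    {ϑa ϑz ϑaz ϑu : 𝒱 → ℝ} (hϑam : Measurable ϑa) (hϑzm : Measurable ϑz)
    (hϑazm : Measurable ϑaz) (hϑum : Measurable ϑu)
    (hϑab : ∃ C, ∀ x, |ϑa x| ≤ C) (hϑzb : ∃ C, ∀ x, |ϑz x| ≤ C)
    (hϑazb : ∃ C, ∀ x, |ϑaz x| ≤ C) (hϑub : ∃ C, ∀ x, |ϑu x| ≤ C)
    (houtcome : μ[Y | MeasurableSpace.comap (fun ω => (V ω, A ω, B ω)) inferInstance]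
        =ᵐ[μ] fun ω => ϑa (V ω) * A ω + ϑz (V ω) * B ω + ϑaz (V ω) * A ω * B ω + ϑu (V ω))
    (horth1 : covE μ (fun x => ϑa (V x)) (fun x => αz (V x)) = 0)
    (horth2 : covE μ (fun x => ϑa (V x)) (fun x => αu (V x)) = 0)
    (horth3 : covE μ (fun x => ϑz (V x)) (fun x => αz (V x)) = 0)
    (horth4 : covE μ (fun x => ϑz (V x)) (fun x => αu (V x)) = 0)
    (horth5 : covE μ (fun x => ϑaz (V x)) (fun x => αz (V x)) = 0)
    (horth6 : covE μ (fun x => ϑaz (V x)) (fun x => αu (V x)) = 0)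
    (horth7 : covE μ (fun x => αz (V x)) (fun x => ϑu (V x)) = 0)
    {w : ℝ → ℝ → ℝ} (hw : Measurable (Function.uncurry w))
    (hΔw : ∫ ω, w 1 (B ω) - w 0 (B ω) ∂μ = 0) :
    ∫ ω, w (A ω) (B ω) * Y ω ∂μ
      = (∫ ω, ϑa (V ω) ∂μ) * (∫ ω, w (A ω) (B ω) * A ω ∂μ)
        + (∫ ω, ϑz (V ω) ∂μ) * (∫ ω, w (A ω) (B ω) * B ω ∂μ)
        + (∫ ω, ϑaz (V ω) ∂μ) * (∫ ω, w (A ω) (B ω) * A ω * B ω ∂μ)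
        + (∫ ω, ϑu (V ω) ∂μ) * ∫ ω, w (A ω) (B ω) ∂μ := by
  have hterm := fun {f : 𝒱 → ℝ} (hf : Measurable f) (hfb : ∃ C, ∀ x, |f x| ≤ C)
      (h : ℝ → ℝ → ℝ) (hh : Measurable (Function.uncurry h)) =>
    And.intro (hM.integrable_comp_V_mul_comp_A_B hf hfb hh)
      (hM.integral_comp_V_mul_comp_A_B_eq_covE hf hfb hh)
  obtain ⟨iA, hdA⟩ := hterm hϑam hϑab (fun a x => w a x * a) (by fun_prop)
  obtain ⟨iZ, hdZ⟩ := hterm hϑzm hϑzb (fun a x => w a x * x) (by fun_prop)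
  obtain ⟨iAZ, hdAZ⟩ := hterm hϑazm hϑazb (fun a x => w a x * a * x) (by fun_prop)
  obtain ⟨iU, hdU⟩ := hterm hϑum hϑub w hw
  have hW : StronglyMeasurable[MeasurableSpace.comap (fun ω => (V ω, A ω, B ω)) inferInstance]
      (fun ω => w (A ω) (B ω)) :=
    ((hw.comp measurable_snd).comp (comap_measurable _)).stronglyMeasurable
  calc ∫ ω, w (A ω) (B ω) * Y ω ∂μ
      = ∫ ω, w (A ω) (B ω)
          * (ϑa (V ω) * A ω + ϑz (V ω) * B ω + ϑaz (V ω) * A ω * B ω + ϑu (V ω)) ∂μ :=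
        integral_mul_eq_integral_mul_of_condExp_ae_eq
          (hM.measurable_V.prodMk (hM.measurable_A.prodMk hM.measurable_B)).comap_le hW
          (hM.memLp_top_comp_A_B hw) hY houtcome
    _ = ∫ ω, ϑa (V ω) * (w (A ω) (B ω) * A ω) + ϑz (V ω) * (w (A ω) (B ω) * B ω)
          + ϑaz (V ω) * (w (A ω) (B ω) * A ω * B ω) + ϑu (V ω) * w (A ω) (B ω) ∂μ := by
        congr 1 with ω
        ring
    _ = _ := by
        rw [integral_add ?_ iU, integral_add ?_ iAZ, integral_add iA iZ, hdA, hdZ, hdAZ, hdU,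
          horth1, horth2, horth3, horth4, horth5, horth6, covE_comm, horth7, hΔw]
        · ring
        · exact iA.add iZ
        · exact (iA.add iZ).add iAZ

end BinaryIVModel

/-- Lemma 4 (first identification equation):
`E[(B − E[B])·(A − E[A|B])·Y]
  = E[(B − E[B])·(A − E[A|B])·A]·E[ϑ_a(V)] + E[B·(B − E[B])·(A − E[A|B])·A]·E[ϑ_az(V)]`. -/
theorem lemma4_first_identification_equation
    {Ω 𝒱 : Type*} [MeasurableSpace Ω] [MeasurableSpace 𝒱]
    (μ : Measure Ω) [IsProbabilityMeasure μ]
    (V : Ω → 𝒱) (A B : Ω → ℝ)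
    (hV : Measurable V) (hA : Measurable A) (hB : Measurable B)
    (hA01 : ∀ ω, A ω = 0 ∨ A ω = 1) (hB01 : ∀ ω, B ω = 0 ∨ B ω = 1)
    (αz αu : 𝒱 → ℝ) (hαzm : Measurable αz) (hαum : Measurable αu)
    (hαzb : ∃ C, ∀ x, |αz x| ≤ C) (hαub : ∃ C, ∀ x, |αu x| ≤ C)
    (htreat : μ[A | MeasurableSpace.comap (fun ω => (B ω, V ω)) inferInstance]
        =ᵐ[μ] fun ω => αz (V ω) * B ω + αu (V ω))
    (hindep : IndepFun B V μ)
    (Y : Ω → ℝ) (hY : Integrable Y μ)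
    (ϑa ϑz ϑaz ϑu : 𝒱 → ℝ)
    (hϑam : Measurable ϑa) (hϑzm : Measurable ϑz)
    (hϑazm : Measurable ϑaz) (hϑum : Measurable ϑu)
    (hϑab : ∃ C, ∀ x, |ϑa x| ≤ C) (hϑzb : ∃ C, ∀ x, |ϑz x| ≤ C)
    (hϑazb : ∃ C, ∀ x, |ϑaz x| ≤ C) (hϑub : ∃ C, ∀ x, |ϑu x| ≤ C)
    (houtcome : μ[Y | MeasurableSpace.comap (fun ω => (V ω, A ω, B ω)) inferInstance]
        =ᵐ[μ] fun ω => ϑa (V ω) * A ω + ϑz (V ω) * B ω + ϑaz (V ω) * A ω * B ω + ϑu (V ω))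
    (horth1 : covE μ (fun x => ϑa (V x)) (fun x => αz (V x)) = 0)
    (horth2 : covE μ (fun x => ϑa (V x)) (fun x => αu (V x)) = 0)
    (horth3 : covE μ (fun x => ϑz (V x)) (fun x => αz (V x)) = 0)
    (horth4 : covE μ (fun x => ϑz (V x)) (fun x => αu (V x)) = 0)
    (horth5 : covE μ (fun x => ϑaz (V x)) (fun x => αz (V x)) = 0)
    (horth6 : covE μ (fun x => ϑaz (V x)) (fun x => αu (V x)) = 0)
    (horth7 : covE μ (fun x => αz (V x)) (fun x => ϑu (V x)) = 0)
    :
    (∫ ω, (B ω - ∫ x, B x ∂μ)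
        * (A ω - (μ[A | MeasurableSpace.comap B inferInstance]) ω) * Y ω ∂μ)
      = (∫ ω, (B ω - ∫ x, B x ∂μ)
          * (A ω - (μ[A | MeasurableSpace.comap B inferInstance]) ω) * A ω ∂μ)
          * (∫ ω, ϑa (V ω) ∂μ)
        + (∫ ω, B ω * (B ω - ∫ x, B x ∂μ)
            * (A ω - (μ[A | MeasurableSpace.comap B inferInstance]) ω) * A ω ∂μ)
          * (∫ ω, ϑaz (V ω) ∂μ) := by
  have hM : BinaryIVModel μ V A B αz αu :=
    ⟨hV, hA, hB, hA01, hB01, hαzm, hαum, hαzb, hαub, htreat, hindep⟩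
  obtain ⟨φ, hφ, hcond⟩ : ∃ φ : ℝ → ℝ, StronglyMeasurable φ ∧
      μ[A | MeasurableSpace.comap B inferInstance] = φ ∘ B :=
    stronglyMeasurable_condExp.exists_eq_measurable_comp
  have hφm := hφ.measurable
  have hres : ∀ q : ℝ → ℝ, Measurable q → ∫ ω, q (B ω) * (A ω - φ (B ω)) ∂μ = 0 := by
    intro q hq
    simpa only [hcond, Function.comp_apply] using integral_mul_sub_condExp_eq_zero hB.comap_le
      (hq.comp (comap_measurable B)).stronglyMeasurable (memLp_top_comp_of_binary hB hB01 hq)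
      (hM.memLp_top_A.integrable le_top)
  rw [hcond]
  simp only [Function.comp_apply]
  set b := ∫ x, B x ∂μ
  have hcontrast : ∫ ω, (B ω - b) * (1 - φ (B ω)) - (B ω - b) * (0 - φ (B ω)) ∂μ = 0 := by
    calc _ = ∫ ω, B ω - b ∂μ := by congr 1 with ω; ring
      _ = 0 := by
        rw [integral_sub (hM.memLp_top_B.integrable le_top) (integrable_const b)]
        simp [b]
  rw [hM.integral_comp_A_B_mul_eq_of_outcome hY hϑam hϑzm hϑazm hϑum hϑab hϑzb hϑazb hϑub houtcome
      horth1 horth2 horth3 horth4 horth5 horth6 horth7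
      (w := fun a x => (x - b) * (a - φ x)) (by fun_prop) hcontrast,
    hres (fun x => x - b) (by fun_prop)]
  have hZ : ∫ ω, (B ω - b) * (A ω - φ (B ω)) * B ω ∂μ = 0 := by
    rw [← hres (fun x => (x - b) * x) (by fun_prop)]
    congr 1 with ω
    ring
  have hAZ : ∫ ω, (B ω - b) * (A ω - φ (B ω)) * A ω * B ω ∂μ
      = ∫ ω, B ω * (B ω - b) * (A ω - φ (B ω)) * A ω ∂μ := by
    congr 1 with ω
    ring
  rw [hZ, hAZ]
  ring
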